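/- (Quantitative form of Theorem 4, case 2 < p < ∞.) Let d ≥ 1, p ∈ (2,∞) with conjugate exponent q ∈ (1,2), σ > 0, η > 0, and set ε = η d^{1/p} σ. Let w ∈ ℝ^d with w ≠ 0, b' ∈ ℝ, and μ ∈ ℝ^d with w·μ ≥ ε‖w‖_q. Then 1 − (1/2)[Φ((w·μ + b')/(‖w‖₂σ) − (‖w‖_q/‖w‖₂)(ε/σ)) + Φ((w·μ − b')/(‖w‖₂σ) − (‖w‖_q/‖w‖₂)(ε/σ))] ≥ 1 − Φ(‖μ‖₂/σ − η d^{1/p}). In particular, the ℓp-adversarial-error rate of any such linear classifier on balanced Gaussian mixture data is at least 1 − Φ(‖μ‖₂/σ − η d^{1/p}). -/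

import Mathlib

open MeasureTheory ProbabilityTheory
open scoped ENNReal NNReal

/-- Euclidean inner product on `ℝ^d`. -/
noncomputable def dotp {d : ℕ} (w x : Fin d → ℝ) : ℝ := ∑ i, w i * x i

/-- The `ℓ₂` norm on `ℝ^d`. -/
noncomputable def l2 {d : ℕ} (w : Fin d → ℝ) : ℝ := Real.sqrt (∑ i, (w i)^2)

/-- The product Gaussian measure `N(m, σ²I_d)` on `ℝ^d`. -/
noncomputable def gaussPi {d : ℕ} (m : Fin d → ℝ) (σ : ℝ) : Measure (Fin d → ℝ) :=
  Measure.pi fun i => gaussianReal (m i) ((σ^2).toNNReal)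

/-- The standard normal cumulative distribution function `Φ`. -/
noncomputable def Phi (x : ℝ) : ℝ := ((gaussianReal 0 1) (Set.Iic x)).toReal

/-- The `ℓp` norm on `ℝ^d` for `p ∈ [1,∞]` (as an extended real exponent). -/
noncomputable def lpnorm {d : ℕ} (p : ℝ≥0∞) (v : Fin d → ℝ) : ℝ :=
  if p = ∞ then ⨆ i, |v i| else (∑ i, |v i| ^ p.toReal) ^ (1 / p.toReal)

/-- The `ℓp` norm on `ℝ^d` for a real exponent `p ∈ [1,∞)`. -/
noncomputable def lpR {d : ℕ} (p : ℝ) (v : Fin d → ℝ) : ℝ := (∑ i, |v i| ^ p) ^ (1/p)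

/-!
With `c = (w·μ)/(‖w‖₂σ) − (‖w‖_q/‖w‖₂)(ε/σ)` and `s = b'/(‖w‖₂σ)` the two arguments of `Φ`
are `c ± s`. The hypothesis `w·μ ≥ ε‖w‖_q` says `c ≥ 0`, and since the standard normal density
decreases in `|t|`, `Φ` is midpoint concave on `[0, ∞)`: `Φ(c + s) + Φ(c − s) ≤ 2Φ(c)`.
Cauchy–Schwarz and `‖w‖₂ ≤ ‖w‖_q` (as `q ≤ 2`) give `c ≤ ‖μ‖₂/σ − ε/σ = ‖μ‖₂/σ − η d^{1/p}`,
and `Φ` is monotone.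
-/

lemma Phi_eq_integral (x : ℝ) : Phi x = ∫ t in Set.Iic x, gaussianPDFReal 0 1 t := by
  rw [Phi, gaussianReal_apply_eq_integral 0 one_ne_zero]
  exact ENNReal.toReal_ofReal
    (setIntegral_nonneg measurableSet_Iic fun t _ => gaussianPDFReal_nonneg 0 1 t)

lemma Phi_monotone : Monotone Phi := fun _ _ hxy =>
  ENNReal.toReal_mono (measure_ne_top _ _) (measure_mono (Set.Iic_subset_Iic.mpr hxy))

lemma gaussianPDFReal_le_of_abs_sub_le {m : ℝ} {v : ℝ≥0} {x y : ℝ} (h : |y - m| ≤ |x - m|) :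
    gaussianPDFReal m v x ≤ gaussianPDFReal m v y := by
  unfold gaussianPDFReal
  refine mul_le_mul_of_nonneg_left (Real.exp_le_exp.mpr ?_) (by positivity)
  rw [neg_div, neg_div, neg_le_neg_iff]
  exact div_le_div_of_nonneg_right (sq_le_sq.mpr h) (by positivity)

lemma Phi_sub_Phi_eq_intervalIntegral (a b : ℝ) :
    Phi b - Phi a = ∫ t in a..b, gaussianPDFReal 0 1 t := by
  have hg := integrable_gaussianPDFReal 0 1
  rw [Phi_eq_integral, Phi_eq_integral]
  exact intervalIntegral.integral_Iic_sub_Iic hg.integrableOn hg.integrableOn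

lemma Phi_add_add_Phi_sub_le {c : ℝ} (hc : 0 ≤ c) (s : ℝ) :
    Phi (c + s) + Phi (c - s) ≤ 2 * Phi c := by
  wlog hs : 0 ≤ s generalizing s
  · have := this (-s) (by linarith)
    rw [sub_neg_eq_add, ← sub_eq_add_neg] at this
    linarith
  set g := gaussianPDFReal 0 1
  have hg : Integrable g := integrable_gaussianPDFReal 0 1
  have hup : Phi (c + s) - Phi c = ∫ u in (0:ℝ)..s, g (c + u) := by
    rw [Phi_sub_Phi_eq_intervalIntegral, intervalIntegral.integral_comp_add_left g, add_zero]
  have hdown : Phi c - Phi (c - s) = ∫ u in (0:ℝ)..s, g (c - u) := by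
    rw [Phi_sub_Phi_eq_intervalIntegral, intervalIntegral.integral_comp_sub_left g, sub_zero]
  have hle : (∫ u in (0:ℝ)..s, g (c + u)) ≤ ∫ u in (0:ℝ)..s, g (c - u) := by
    refine intervalIntegral.integral_mono_on hs ?_ ?_ fun u hu => ?_
    · simpa using (hg.intervalIntegrable (a := c) (b := c + s)).comp_add_left c
    · simpa using ((hg.intervalIntegrable (a := c - s) (b := c)).comp_sub_left c).symm
    · refine gaussianPDFReal_le_of_abs_sub_le ?_
      rw [sub_zero, sub_zero, abs_of_nonneg (by linarith [hu.1] : 0 ≤ c + u)]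
      exact abs_le.mpr ⟨by linarith [hu.1], by linarith [hu.1]⟩
  linarith

lemma ENNReal.conjExponent_ne_zero {p q : ℝ≥0∞} (hpq : 1 / p + 1 / q = 1) : q ≠ 0 := by
  rintro rfl
  simp at hpq

lemma ENNReal.conjExponent_le_two {p q : ℝ≥0∞} (hp : 2 ≤ p) (hpq : 1 / p + 1 / q = 1) :
    q ≤ 2 := by
  by_contra! hq
  have hp' : 1 / p ≤ 2⁻¹ := by simpa [one_div] using ENNReal.inv_le_inv.mpr hp
  have hq' : 1 / q < 2⁻¹ := by simpa using ENNReal.inv_lt_inv.mpr hq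
  have := ENNReal.add_lt_add_of_le_of_lt (by simp [(zero_lt_two.trans_le hp).ne']) hp' hq'
  rw [hpq, ENNReal.inv_two_add_inv_two] at this
  exact lt_irrefl _ this

lemma sum_rpow_le_rpow_sum {ι : Type*} (s : Finset ι) {f : ι → ℝ} (hf : ∀ i, 0 ≤ f i)
    {t : ℝ} (ht : 1 ≤ t) : ∑ i ∈ s, f i ^ t ≤ (∑ i ∈ s, f i) ^ t := by
  induction s using Finset.cons_induction with
  | empty => simp [Real.zero_rpow (by linarith : t ≠ 0)]
  | cons a s _ ih =>
    rw [Finset.sum_cons, Finset.sum_cons]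
    calc f a ^ t + ∑ i ∈ s, f i ^ t ≤ f a ^ t + (∑ i ∈ s, f i) ^ t := by gcongr
      _ ≤ (f a + ∑ i ∈ s, f i) ^ t :=
        Real.add_rpow_le_rpow_add (hf a) (Finset.sum_nonneg fun i _ => hf i) ht

lemma l2_le_lpnorm {d : ℕ} {q : ℝ≥0∞} (hq0 : q ≠ 0) (hq2 : q ≤ 2) (w : Fin d → ℝ) :
    l2 w ≤ lpnorm q w := by
  have hqtop : q ≠ ∞ := ne_top_of_le_ne_top ENNReal.ofNat_ne_top hq2
  set r := q.toReal
  have hr : 0 < r := ENNReal.toReal_pos hq0 hqtop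
  have hr2 : r ≤ 2 := by simpa using ENNReal.toReal_mono ENNReal.ofNat_ne_top hq2
  set S := ∑ i, |w i| ^ r
  have hS : 0 ≤ S := Finset.sum_nonneg fun i _ => by positivity
  have hsq : ∑ i, w i ^ 2 ≤ S ^ (2 / r) := by
    calc ∑ i, w i ^ 2 = ∑ i, (|w i| ^ r) ^ (2 / r) := by
          refine Finset.sum_congr rfl fun i _ => ?_
          rw [← Real.rpow_mul (abs_nonneg _), mul_div_cancel₀ _ hr.ne', ← sq_abs]
          norm_cast
      _ ≤ S ^ (2 / r) :=
          sum_rpow_le_rpow_sum _ (fun i => by positivity) ((one_le_div hr).mpr hr2)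
  rw [lpnorm, if_neg hqtop, l2, Real.sqrt_le_left (by positivity), ← Real.rpow_natCast,
    ← Real.rpow_mul hS]
  convert hsq using 2
  push_cast
  ring

lemma dotp_le_l2_mul_l2 {d : ℕ} (w x : Fin d → ℝ) : dotp w x ≤ l2 w * l2 x :=
  Real.sum_mul_le_sqrt_mul_sqrt Finset.univ w x

lemma l2_pos {d : ℕ} {w : Fin d → ℝ} (hw : w ≠ 0) : 0 < l2 w := by
  obtain ⟨i, hi⟩ := Function.ne_iff.mp hw
  exact Real.sqrt_pos.mpr
    (Finset.sum_pos' (fun j _ => sq_nonneg _) ⟨i, Finset.mem_univ i, sq_pos_of_ne_zero hi⟩)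

theorem lp_adversarial_error_bound_large_p_general {d : ℕ}
    (p q : ℝ≥0∞) (hp2 : 2 < p) (hpq : 1/p + 1/q = 1)
    (σ η : ℝ) (hσ : 0 < σ) (hη : 0 < η)
    (ε : ℝ) (hε : ε = η * (d : ℝ) ^ (1 / p.toReal) * σ)
    (w : Fin d → ℝ) (hw : w ≠ 0) (b' : ℝ)
    (μ : Fin d → ℝ) (h : ε * lpnorm q w ≤ dotp w μ) :
    1 - (1/2) * (Phi ((dotp w μ + b') / (l2 w * σ) - (lpnorm q w / l2 w) * (ε / σ)) +
                  Phi ((dotp w μ - b') / (l2 w * σ) - (lpnorm q w / l2 w) * (ε / σ))) ≥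
      1 - Phi (l2 μ / σ - η * (d : ℝ) ^ (1 / p.toReal)) := by
  have hw₂ : 0 < l2 w := l2_pos hw
  have hκ : ε / σ = η * (d : ℝ) ^ (1 / p.toReal) := by rw [hε]; field_simp
  have hκ₀ : 0 ≤ ε / σ := hκ ▸ by positivity
  set c := dotp w μ / (l2 w * σ) - lpnorm q w / l2 w * (ε / σ) with hc
  set s := b' / (l2 w * σ)
  have hc₀ : 0 ≤ c := by
    rw [hc, div_mul_div_comm, mul_comm (lpnorm q w), sub_nonneg]
    gcongr
  have hc_le : c ≤ l2 μ / σ - η * (d : ℝ) ^ (1 / p.toReal) := by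
    have hq : 1 ≤ lpnorm q w / l2 w := (one_le_div hw₂).mpr <| l2_le_lpnorm
      (ENNReal.conjExponent_ne_zero hpq) (ENNReal.conjExponent_le_two hp2.le hpq) w
    have hCS : dotp w μ / (l2 w * σ) ≤ l2 μ / σ :=
      calc dotp w μ / (l2 w * σ) ≤ l2 w * l2 μ / (l2 w * σ) := by
            gcongr; exact dotp_le_l2_mul_l2 w μ
        _ = l2 μ / σ := mul_div_mul_left _ _ hw₂.ne'
    rw [← hκ]
    linarith [mul_le_mul_of_nonneg_right hq hκ₀]
  have h_add : (dotp w μ + b') / (l2 w * σ) - lpnorm q w / l2 w * (ε / σ) = c + s := by ring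
  have h_sub : (dotp w μ - b') / (l2 w * σ) - lpnorm q w / l2 w * (ε / σ) = c - s := by ring
  rw [h_add, h_sub]
  linarith [Phi_add_add_Phi_sub_le hc₀ s, Phi_monotone hc_le]

/-- Theorem 4, case `2 < p < ∞`: with `ε = η d^{1/p} σ` and
`w·μ ≥ ε‖w‖_q`, the `ℓp`-adversarial-error rate is at least
`1 − Φ(‖μ‖₂/σ − η d^{1/p})`. -/
theorem lp_adversarial_error_bound_large_p {d : ℕ} (hd : 1 ≤ d)
    (p q : ℝ≥0∞) (hp2 : 2 < p) (hptop : p ≠ ∞) (hpq : 1/p + 1/q = 1)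
    (σ η : ℝ) (hσ : 0 < σ) (hη : 0 < η)
    (ε : ℝ) (hε : ε = η * (d : ℝ) ^ (1 / p.toReal) * σ)
    (w : Fin d → ℝ) (hw : w ≠ 0) (b' : ℝ)
    (μ : Fin d → ℝ) (h : ε * lpnorm q w ≤ dotp w μ) :
    1 - (1/2) * (Phi ((dotp w μ + b') / (l2 w * σ) - (lpnorm q w / l2 w) * (ε / σ)) +
                  Phi ((dotp w μ - b') / (l2 w * σ) - (lpnorm q w / l2 w) * (ε / σ))) ≥
      1 - Phi (l2 μ / σ - η * (d : ℝ) ^ (1 / p.toReal)) :=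
  lp_adversarial_error_bound_large_p_general p q hp2 hpq σ η hσ hη ε hε w hw b' μ h
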